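/- The bulk-to-bulk propagator solves the homogeneous Klein–Gordon equation away from the coincident point, and G_h and G_{1−h} solve the same equation. Let h>0 and fix a bulk point 𝐱′=(u′,z′) with u′>0 and z′∈ℝ. On the open set of bulk points 𝐱=(u,z)∈ℝ_{>0}×ℝ with 𝐱≠𝐱′ (equivalently 0<ξ(𝐱,𝐱′)<1), the function 𝐱 ↦ G_h(𝐱,𝐱′) is smooth and satisfies u²·(∂²G_h/∂u² + ∂²G_h/∂z²) = h(h−1)·G_h(𝐱,𝐱′). Since (1−h)(−h) = h(h−1), the function G_{1−h}(𝐱,𝐱′) satisfies the identical equation on the same set (for 0<h<1, so that 1−h>0), and hence for 2h∉ℤ the modified propagator G̃_h(𝐱,𝐱′) also satisfies u²(∂²_u+∂²_z)G̃_h = h(h−1)·G̃_h there. -/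

import Mathlib

open Complex Real MeasureTheory Filter Set Topology

noncomputable section

/-- Pochhammer symbol `(a)_n`. -/
def poch (a : ℂ) (n : ℕ) : ℂ := (ascPochhammer ℂ n).eval a

/-- Gauss hypergeometric series `₂F₁(a,b;c;x)`. -/
def hyp2F1 (a b c x : ℂ) : ℂ :=
  ∑' n : ℕ, poch a n * poch b n / (poch c n * (n.factorial : ℂ)) * x ^ n

/-- Chordal variable `ξ((u,z),(u',z'))`. -/
def chordal (u : ℝ) (z : ℂ) (u' : ℝ) (z' : ℂ) : ℂ :=
  2 * u * u' / ((u : ℂ) ^ 2 + (u' : ℂ) ^ 2 + (z - z') ^ 2)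

/-- Bulk-to-bulk propagator `G_h((u,z),(u',z'))`. -/
def Gbb (h : ℝ) (u : ℝ) (z : ℂ) (u' : ℝ) (z' : ℂ) : ℂ :=
  (chordal u z u' z' / 2) ^ (h : ℂ) *
    hyp2F1 ((h : ℂ) / 2) (((h : ℂ) + 1) / 2) ((h : ℂ) + 1 / 2) (chordal u z u' z' ^ 2)

/-- Bulk-to-boundary propagator `K_h((u,z),w)`. -/
def Kb (h : ℝ) (u : ℝ) (z w : ℂ) : ℂ :=
  ((u : ℂ) / ((u : ℂ) ^ 2 + (z - w) ^ 2)) ^ (h : ℂ)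

/-- Smearing function `𝕂_h((u,z),w)`. -/
def smear (h : ℝ) (u : ℝ) (z w : ℂ) : ℂ :=
  (-2 * I / (4 : ℂ) ^ (h : ℂ)) * (Complex.Gamma (2 * h) / Complex.Gamma h ^ 2) *
    ((u : ℂ) / ((u : ℂ) ^ 2 + (z - w) ^ 2)) ^ (1 - (h : ℂ))

/-- Modified propagator `Ĝ_h((u,z),(u',z'),w)`. -/
def Ghat (h : ℝ) (u : ℝ) (z : ℂ) (u' : ℝ) (z' w : ℂ) : ℂ :=
  Kb h u z w * smear h u' z' w

/-- Modified propagator `G̃_h((u,z),(u',z'))`. -/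
def Gtilde (h : ℝ) (u : ℝ) (z : ℂ) (u' : ℝ) (z' : ℂ) : ℂ :=
  (-2 * I / (4 : ℂ) ^ (h : ℂ)) * (Complex.Gamma (2 * h) / Complex.Gamma h ^ 2) *
    (Complex.Gamma (1 - 2 * h) / Complex.Gamma (1 - (h : ℂ)) ^ 2 * Gbb h u z u' z' +
      Complex.Gamma (2 * h - 1) / Complex.Gamma h ^ 2 * Gbb (1 - h) u z u' z')

/-- Complex line integral along the straight segment from `a` to `b`. -/
def segInt (a b : ℂ) (f : ℂ → ℂ) : ℂ :=
  (b - a) * ∫ t in (0:ℝ)..1, f (a + (t : ℂ) * (b - a))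

/-- Integral over the Π-bump contour at `p` of half-width `ε`, based at `Re p`. -/
def piBumpInt (ε : ℝ) (p : ℂ) (f : ℂ → ℂ) : ℂ :=
  segInt ((p.re - ε : ℝ) : ℂ) (p - ε) f + segInt (p - ε) (p + ε) f +
    segInt (p + ε) ((p.re + ε : ℝ) : ℂ) f

/-- Integral over the real line in which, for each `k`, the interval
`(zs k - ε, zs k + ε)` is replaced by the Π-bump contour at `ws k` of half-width `ε`. -/
def bumpedLineInt (ε : ℝ) {n : ℕ} (zs : Fin n → ℝ) (ws : Fin n → ℂ) (g : ℂ → ℂ) : ℂ :=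
  (∫ t in {t : ℝ | ∀ k, ε ≤ |t - zs k|}, g (t : ℂ)) + ∑ k, piBumpInt ε (ws k) g

/-- `γ_{h₁h₂h₃}`. -/
def gamma3 (h1 h2 h3 : ℝ) : ℂ :=
  (Complex.Gamma (1 - 2 * h1) * Complex.Gamma (1 - 2 * h2) * Complex.Gamma (1 - 2 * h3) /
      (Complex.Gamma (2 - h1 - h2 - h3) * Complex.Gamma (1 + h3 - h1 - h2) *
        Complex.Gamma (1 + h2 - h1 - h3) * Complex.Gamma (1 + h1 - h2 - h3))) ^ ((1 : ℂ) / 2)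

/-- The boundary three-point function `⟨O_{h₁}(w₁)O_{h₂}(w₂)O_{h₃}(w₃)⟩`. -/
def threePt (h1 h2 h3 : ℝ) (w1 w2 w3 : ℂ) : ℂ :=
  gamma3 h1 h2 h3 * (w1 - w2) ^ (-(h1 : ℂ) - h2 + h3) * (w2 - w3) ^ ((h1 : ℂ) - h2 - h3) *
    (w3 - w1) ^ (-(h1 : ℂ) + h2 - h3)

/-- The 3-point AdS vertex function `V_{h₁h₂h₃}(𝐱₁,𝐱₂,𝐱₃)`. -/
def vertex3 (h1 h2 h3 : ℝ) (u1 z1 u2 z2 u3 z3 : ℝ) : ℂ :=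
  segInt ((z1 : ℂ) - I * u1) ((z1 : ℂ) + I * u1) fun w1 =>
    segInt ((z2 : ℂ) - I * u2) ((z2 : ℂ) + I * u2) fun w2 =>
      segInt ((z3 : ℂ) - I * u3) ((z3 : ℂ) + I * u3) fun w3 =>
        smear h1 u1 (z1 : ℂ) w1 * smear h2 u2 (z2 : ℂ) w2 * smear h3 u3 (z3 : ℂ) w3 *
          threePt h1 h2 h3 w1 w2 w3

/-- The coefficient `a(h;h₁,h₂;n)`. -/
def acoef (h h1 h2 : ℝ) (n : ℕ) : ℂ :=
  (2 * (Real.sqrt π : ℂ) / Complex.Gamma (h : ℂ)) *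
    ((-1 : ℂ) ^ n * poch (h1 : ℂ) n * poch (h2 : ℂ) n /
      ((n.factorial : ℂ) * poch ((h1 : ℂ) + h2 - 1 / 2 + n) n)) *
    (Complex.Gamma ((h : ℂ) + 1 / 2) /
      ((h : ℂ) * ((h : ℂ) - 1) - ((h1 : ℂ) + h2 + 2 * n) * ((h1 : ℂ) + h2 + 2 * n - 1)))

/-- The coefficient `κ_n^{(i|jk)} = a(h_i;h_j,h_k;n)/γ_{h_j h_k h_{jk|n}}`. -/
def kcoef (hi hj hk : ℝ) (n : ℕ) : ℂ :=
  acoef hi hj hk n / gamma3 hj hk (hj + hk + 2 * n)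

/-- The coefficient `κ₀`. -/
def kappa0 (h1 h2 h3 : ℝ) : ℂ :=
  ((Real.sqrt π : ℂ) / 2) * (Complex.Gamma (((h1 : ℂ) + h2 + h3 - 1) / 2) / gamma3 h1 h2 h3) *
    (Complex.Gamma ((-(h1 : ℂ) + h2 + h3) / 2) * Complex.Gamma (((h1 : ℂ) - h2 + h3) / 2) *
      Complex.Gamma (((h1 : ℂ) + h2 - h3) / 2) /
      (Complex.Gamma (h1 : ℂ) * Complex.Gamma (h2 : ℂ) * Complex.Gamma (h3 : ℂ)))

/-- A test function adapted to weights `hw k` and bulk points `(us k, zs k)`. -/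
structure IsTestFunction (n : ℕ) (hw : Fin n → ℝ) (us zs : Fin n → ℝ)
    (f : ℝ → ℂ → ℂ) : Prop where
  continuous_u : ∀ z : ℂ, ContinuousOn (fun u => f u z) (Set.Ioi 0)
  holo : ∃ U : Set ℂ, IsOpen U ∧ (∀ x : ℝ, (x : ℂ) ∈ U) ∧
    (∀ k, {x : ℂ | |x.re - zs k| ≤ 1 ∧ |x.im| ≤ us k} ⊆ U) ∧
    ∀ u ∈ Set.Ioi (0 : ℝ), DifferentiableOn ℂ (f u) U
  decay : ∀ k, ∀ K : Set ℂ, IsCompact K →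
    TendstoUniformlyOn (fun (u : ℝ) (z : ℂ) => (u : ℂ) ^ (-(hw k : ℂ)) * f u z)
      (fun _ => 0) (nhdsWithin 0 (Set.Ioi 0)) K


namespace KGaux

/-- `(a+n)/(b+n) → 1`. -/
lemma tendsto_ratio (a b : ℂ) (hb : ∀ n : ℕ, b + n ≠ 0) :
    Tendsto (fun n : ℕ => (a + n) / (b + n)) atTop (nhds 1) := by
  have hnorm : Tendsto (fun n : ℕ => ‖(b + n : ℂ)‖) atTop atTop := by
    apply tendsto_atTop_mono' atTop (f₁ := fun n : ℕ => (n : ℝ) - ‖b‖)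
    · filter_upwards with n
      calc (n : ℝ) - ‖b‖ = ‖((n : ℕ) : ℂ)‖ - ‖-b‖ := by
            simp [Complex.norm_natCast]
        _ ≤ ‖((n : ℕ) : ℂ) - (-b)‖ := norm_sub_norm_le _ _
        _ = ‖(b + n : ℂ)‖ := by rw [sub_neg_eq_add, add_comm]
    · have h1 : Tendsto (fun n : ℕ => (n : ℝ)) atTop atTop := tendsto_natCast_atTop_atTop
      simpa [sub_eq_add_neg] using tendsto_atTop_add_const_right atTop (-‖b‖) h1
  have h0 : Tendsto (fun n : ℕ => ((b + n : ℂ))⁻¹) atTop (nhds 0) := by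
    rw [tendsto_zero_iff_norm_tendsto_zero]
    simpa [norm_inv, Pi.inv_def] using hnorm.inv_tendsto_atTop
  have heq : ∀ n : ℕ, (a + n) / (b + n) = 1 + (a - b) * (b + n)⁻¹ := by
    intro n
    field_simp [hb n]
    ring
  simp only [heq]
  have := tendsto_const_nhds (x := (1:ℂ)) (f := atTop (α := ℕ)) |>.add (h0.const_mul (a - b))
  simpa using this

/-- real version for the simple rational factors -/
lemma tendsto_ratio_real (a b : ℝ) (hb : ∀ n : ℕ, (0:ℝ) < b + n) :
    Tendsto (fun n : ℕ => (a + n) / (b + n)) atTop (nhds 1) := by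
  have hnorm : Tendsto (fun n : ℕ => b + (n:ℝ)) atTop atTop := by
    have h1 : Tendsto (fun n : ℕ => (n : ℝ)) atTop atTop := tendsto_natCast_atTop_atTop
    simpa [add_comm] using tendsto_atTop_add_const_right atTop b h1
  have h0 : Tendsto (fun n : ℕ => (b + (n:ℝ))⁻¹) atTop (nhds 0) := by
    simpa [Pi.inv_def] using hnorm.inv_tendsto_atTop
  have heq : ∀ n : ℕ, (a + n) / (b + n) = 1 + (a - b) * (b + n)⁻¹ := by
    intro n
    field_simp [ne_of_gt (hb n)]
    ring
  simp only [heq]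
  have := tendsto_const_nhds (x := (1:ℝ)) (f := atTop (α := ℕ)) |>.add (h0.const_mul (a - b))
  simpa using this

end KGaux
namespace KGaux2

variable {c : ℕ → ℂ}

lemma pow_sub_le {r : ℝ} (h0 : 0 < r) (h1 : r ≤ 1) (k n : ℕ) : r ^ (n - k) ≤ r ^ n / r ^ k := by
  rw [le_div_iff₀ (by positivity), ← pow_add]
  exact pow_le_pow_of_le_one h0.le h1 le_tsub_add

/-- master summable bound -/
lemma summable_master (hc : ∀ n, c n ≠ 0)
    (hr : Tendsto (fun n => ‖c (n + 1)‖ / ‖c n‖) atTop (nhds 1))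
    {r : ℝ} (h0 : 0 < r) (h1 : r < 1) :
    Summable (fun n : ℕ => ‖c n‖ * (((n : ℝ) + 2) * ((n : ℝ) + 1)) * r ^ n) := by
  have hpos : ∀ n : ℕ, 0 < ‖c n‖ * (((n : ℝ) + 2) * ((n : ℝ) + 1)) * r ^ n := by
    intro n
    have h2 : 0 < ‖c n‖ := norm_pos_iff.mpr (hc n)
    positivity
  apply summable_of_ratio_test_tendsto_lt_one h1
    (Eventually.of_forall fun n => ne_of_gt (hpos n))
  have heq : ∀ n : ℕ,
      ‖‖c (n + 1)‖ * ((((n + 1 : ℕ) : ℝ) + 2) * (((n + 1 : ℕ) : ℝ) + 1)) * r ^ (n + 1)‖ /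
        ‖‖c n‖ * (((n : ℝ) + 2) * ((n : ℝ) + 1)) * r ^ n‖ =
      (‖c (n + 1)‖ / ‖c n‖) * ((((n : ℝ) + 3) / ((n : ℝ) + 1)) * r) := by
    intro n
    have h2 : 0 < ‖c n‖ := norm_pos_iff.mpr (hc n)
    have h3 : 0 < ‖c (n + 1)‖ := norm_pos_iff.mpr (hc (n + 1))
    rw [Real.norm_of_nonneg (le_of_lt (hpos (n+1))), Real.norm_of_nonneg (le_of_lt (hpos n))]
    have hden1 : ‖c n‖ * (((n : ℝ) + 2) * ((n : ℝ) + 1)) * r ^ n ≠ 0 := ne_of_gt (hpos n)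
    have hden2 : ‖c n‖ * ((n : ℝ) + 1) ≠ 0 := by positivity
    have e1 : ((n : ℝ) + 1) ≠ 0 := by positivity
    rw [div_mul_eq_mul_div, div_eq_div_iff hden1 h2.ne']
    field_simp
    push_cast
    ring
  simp only [heq]
  have hp : Tendsto (fun n : ℕ => (((n : ℝ) + 3) / ((n : ℝ) + 1))) atTop (nhds 1) := by
    have := KGaux.tendsto_ratio_real 3 1 (fun n => by positivity)
    simpa [add_comm] using this
  have := hr.mul (hp.mul (tendsto_const_nhds (x := r)))
  simpa using this

end KGaux2
namespace KGaux3
open KGaux KGaux2 Filter Metric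

/-- sum of the power series -/
def S0 (c : ℕ → ℂ) (w : ℂ) : ℂ := ∑' n : ℕ, c n * w ^ n
/-- termwise derivative -/
def S1 (c : ℕ → ℂ) (w : ℂ) : ℂ := ∑' n : ℕ, c n * (n : ℂ) * w ^ (n - 1)
/-- termwise second derivative -/
def S2 (c : ℕ → ℂ) (w : ℂ) : ℂ := ∑' n : ℕ, c n * (n : ℂ) * ((n - 1 : ℕ) : ℂ) * w ^ (n - 2)

variable {c : ℕ → ℂ}

lemma norm_term0_le {r : ℝ} (h1 : r ≤ 1) {w : ℂ} (hw : ‖w‖ ≤ r) (n : ℕ) :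
    ‖c n * w ^ n‖ ≤ ‖c n‖ * (((n : ℝ) + 2) * ((n : ℝ) + 1)) * r ^ n := by
  have h2 : (0:ℝ) ≤ r := le_trans (norm_nonneg w) hw
  rw [norm_mul, norm_pow]
  calc ‖c n‖ * ‖w‖ ^ n ≤ (‖c n‖ * (((n : ℝ) + 2) * ((n : ℝ) + 1))) * r ^ n := by
        apply mul_le_mul
        · apply le_mul_of_one_le_right (norm_nonneg _)
          have := Nat.cast_nonneg (α := ℝ) n
          nlinarith
        · exact pow_le_pow_left₀ (norm_nonneg w) hw n
        · positivity
        · positivity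
    _ = ‖c n‖ * (((n : ℝ) + 2) * ((n : ℝ) + 1)) * r ^ n := by ring

lemma norm_term1_le {r : ℝ} (h0 : 0 < r) (h1 : r ≤ 1) {w : ℂ} (hw : ‖w‖ ≤ r) (n : ℕ) :
    ‖c n * (n : ℂ) * w ^ (n - 1)‖ ≤ ‖c n‖ * (((n : ℝ) + 2) * ((n : ℝ) + 1)) * r ^ n / r := by
  rw [norm_mul, norm_mul, norm_pow, Complex.norm_natCast]
  have hwp : ‖w‖ ^ (n - 1) ≤ r ^ n / r := by
    calc ‖w‖ ^ (n - 1) ≤ r ^ (n - 1) := pow_le_pow_left₀ (norm_nonneg w) hw _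
      _ ≤ r ^ n / r ^ 1 := pow_sub_le h0 h1 1 n
      _ = r ^ n / r := by rw [pow_one]
  have hn2 : (n : ℝ) ≤ ((n : ℝ) + 2) * ((n : ℝ) + 1) := by
    have := Nat.cast_nonneg (α := ℝ) n
    nlinarith
  calc ‖c n‖ * (n : ℝ) * ‖w‖ ^ (n - 1)
      ≤ (‖c n‖ * (((n : ℝ) + 2) * ((n : ℝ) + 1))) * (r ^ n / r) := by
        apply mul_le_mul
        · exact mul_le_mul le_rfl hn2 (Nat.cast_nonneg n) (norm_nonneg _)
        · exact hwp
        · positivity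
        · positivity
    _ = ‖c n‖ * (((n : ℝ) + 2) * ((n : ℝ) + 1)) * r ^ n / r := by ring

lemma norm_term2_le {r : ℝ} (h0 : 0 < r) (h1 : r ≤ 1) {w : ℂ} (hw : ‖w‖ ≤ r) (n : ℕ) :
    ‖c n * (n : ℂ) * ((n - 1 : ℕ) : ℂ) * w ^ (n - 2)‖ ≤
      ‖c n‖ * (((n : ℝ) + 2) * ((n : ℝ) + 1)) * r ^ n / r ^ 2 := by
  rw [norm_mul, norm_mul, norm_mul, norm_pow, Complex.norm_natCast, Complex.norm_natCast]
  have hwp : ‖w‖ ^ (n - 2) ≤ r ^ n / r ^ 2 := by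
    calc ‖w‖ ^ (n - 2) ≤ r ^ (n - 2) := pow_le_pow_left₀ (norm_nonneg w) hw _
      _ ≤ r ^ n / r ^ 2 := pow_sub_le h0 h1 2 n
  have hcast : ((n - 1 : ℕ) : ℝ) ≤ (n : ℝ) := by
    exact_mod_cast Nat.sub_le n 1
  have hn2 : (n : ℝ) * ((n - 1 : ℕ) : ℝ) ≤ ((n : ℝ) + 2) * ((n : ℝ) + 1) := by
    have h4 := Nat.cast_nonneg (α := ℝ) n
    have h5 : (0:ℝ) ≤ ((n - 1 : ℕ) : ℝ) := Nat.cast_nonneg _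
    nlinarith
  calc ‖c n‖ * (n : ℝ) * ((n - 1 : ℕ) : ℝ) * ‖w‖ ^ (n - 2)
      ≤ (‖c n‖ * (((n : ℝ) + 2) * ((n : ℝ) + 1))) * (r ^ n / r ^ 2) := by
        apply mul_le_mul
        · rw [mul_assoc]
          exact mul_le_mul le_rfl hn2 (by positivity) (norm_nonneg _)
        · exact hwp
        · positivity
        · positivity
    _ = ‖c n‖ * (((n : ℝ) + 2) * ((n : ℝ) + 1)) * r ^ n / r ^ 2 := by ring

variable (hc : ∀ n, c n ≠ 0)
  (hr : Tendsto (fun n => ‖c (n + 1)‖ / ‖c n‖) atTop (nhds 1))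
include hc hr

lemma summable0 {w : ℂ} (hw : ‖w‖ < 1) : Summable (fun n : ℕ => c n * w ^ n) := by
  set r := (1 + ‖w‖) / 2 with hrd
  have h0 : 0 < r := by positivity
  have h1 : r < 1 := by rw [hrd]; linarith
  have hwr : ‖w‖ ≤ r := by rw [hrd]; linarith [norm_nonneg w]
  exact Summable.of_norm_bounded (summable_master hc hr h0 h1) (norm_term0_le h1.le hwr)

lemma summable1 {w : ℂ} (hw : ‖w‖ < 1) :
    Summable (fun n : ℕ => c n * (n : ℂ) * w ^ (n - 1)) := by
  set r := (1 + ‖w‖) / 2 with hrd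
  have h0 : 0 < r := by positivity
  have h1 : r < 1 := by rw [hrd]; linarith
  have hwr : ‖w‖ ≤ r := by rw [hrd]; linarith [norm_nonneg w]
  exact Summable.of_norm_bounded ((summable_master hc hr h0 h1).div_const r)
    (norm_term1_le h0 h1.le hwr)

lemma summable2 {w : ℂ} (hw : ‖w‖ < 1) :
    Summable (fun n : ℕ => c n * (n : ℂ) * ((n - 1 : ℕ) : ℂ) * w ^ (n - 2)) := by
  set r := (1 + ‖w‖) / 2 with hrd
  have h0 : 0 < r := by positivity
  have h1 : r < 1 := by rw [hrd]; linarith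
  have hwr : ‖w‖ ≤ r := by rw [hrd]; linarith [norm_nonneg w]
  exact Summable.of_norm_bounded ((summable_master hc hr h0 h1).div_const (r ^ 2))
    (norm_term2_le h0 h1.le hwr)

lemma hasDerivAt_S0 {z : ℂ} (hz : ‖z‖ < 1) : HasDerivAt (S0 c) (S1 c z) z := by
  set r := (1 + ‖z‖) / 2 with hrd
  have h0 : 0 < r := by positivity
  have h1 : r < 1 := by rw [hrd]; linarith
  have hzU : z ∈ Metric.ball (0 : ℂ) r := by
    rw [mem_ball_zero_iff]; rw [hrd]; linarith [norm_nonneg z]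
  have hM := summable_master hc hr h0 h1
  have hbound : ∀ n : ℕ, ∀ w ∈ Metric.ball (0 : ℂ) r, ‖c n * w ^ n‖ ≤
      ‖c n‖ * (((n : ℝ) + 2) * ((n : ℝ) + 1)) * r ^ n :=
    fun n w hwU => norm_term0_le h1.le (le_of_lt (mem_ball_zero_iff.mp hwU)) n
  have hdiff : ∀ n : ℕ, DifferentiableOn ℂ (fun w : ℂ => c n * w ^ n) (Metric.ball 0 r) :=
    fun n => ((differentiable_pow n).const_mul (c n)).differentiableOn
  have hDon := differentiableOn_tsum_of_summable_norm hM hdiff Metric.isOpen_ball hbound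
  have hDat : DifferentiableAt ℂ (fun w : ℂ => ∑' n : ℕ, c n * w ^ n) z :=
    hDon.differentiableAt (Metric.isOpen_ball.mem_nhds hzU)
  have hs := hasSum_deriv_of_summable_norm hM hdiff Metric.isOpen_ball hbound hzU
  have heq : (fun n : ℕ => deriv (fun w : ℂ => c n * w ^ n) z) =
      fun n : ℕ => c n * (n : ℂ) * z ^ (n - 1) := by
    funext n
    rw [((hasDerivAt_pow n z).const_mul (c n)).deriv]
    ring
  rw [heq] at hs
  have hval : deriv (fun w : ℂ => ∑' n : ℕ, c n * w ^ n) z = S1 c z := by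
    rw [S1]; exact hs.tsum_eq.symm
  have := hDat.hasDerivAt
  rw [hval] at this
  exact this

lemma hasDerivAt_S1 {z : ℂ} (hz : ‖z‖ < 1) : HasDerivAt (S1 c) (S2 c z) z := by
  set r := (1 + ‖z‖) / 2 with hrd
  have h0 : 0 < r := by positivity
  have h1 : r < 1 := by rw [hrd]; linarith
  have hzU : z ∈ Metric.ball (0 : ℂ) r := by
    rw [mem_ball_zero_iff]; rw [hrd]; linarith [norm_nonneg z]
  have hM := (summable_master hc hr h0 h1).div_const r
  have hbound : ∀ n : ℕ, ∀ w ∈ Metric.ball (0 : ℂ) r, ‖c n * (n : ℂ) * w ^ (n - 1)‖ ≤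
      ‖c n‖ * (((n : ℝ) + 2) * ((n : ℝ) + 1)) * r ^ n / r :=
    fun n w hwU => norm_term1_le h0 h1.le (le_of_lt (mem_ball_zero_iff.mp hwU)) n
  have hdiff : ∀ n : ℕ, DifferentiableOn ℂ (fun w : ℂ => c n * (n : ℂ) * w ^ (n - 1))
      (Metric.ball 0 r) :=
    fun n => ((differentiable_pow (n - 1)).const_mul (c n * (n : ℂ))).differentiableOn
  have hDon := differentiableOn_tsum_of_summable_norm hM hdiff Metric.isOpen_ball hbound
  have hDat : DifferentiableAt ℂ (fun w : ℂ => ∑' n : ℕ, c n * (n : ℂ) * w ^ (n - 1)) z :=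
    hDon.differentiableAt (Metric.isOpen_ball.mem_nhds hzU)
  have hs := hasSum_deriv_of_summable_norm hM hdiff Metric.isOpen_ball hbound hzU
  have heq : (fun n : ℕ => deriv (fun w : ℂ => c n * (n : ℂ) * w ^ (n - 1)) z) =
      fun n : ℕ => c n * (n : ℂ) * ((n - 1 : ℕ) : ℂ) * z ^ (n - 2) := by
    funext n
    rw [((hasDerivAt_pow (n - 1) z).const_mul (c n * (n : ℂ))).deriv]
    rw [show n - 1 - 1 = n - 2 from by omega]
    ring
  rw [heq] at hs
  have hval : deriv (fun w : ℂ => ∑' n : ℕ, c n * (n : ℂ) * w ^ (n - 1)) z = S2 c z := by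
    rw [S2]; exact hs.tsum_eq.symm
  have := hDat.hasDerivAt
  rw [hval] at this
  exact this

lemma contDiffAt_S0 {z : ℂ} (hz : ‖z‖ < 1) : ContDiffAt ℝ (⊤ : ℕ∞) (S0 c) z := by
  have hDon : DifferentiableOn ℂ (S0 c) (Metric.ball 0 1) := fun w hw =>
    ((hasDerivAt_S0 hc hr (by simpa [mem_ball_zero_iff] using hw)).differentiableAt).differentiableWithinAt
  have := (hDon.contDiffOn (n := ((⊤ : ℕ∞) : WithTop ℕ∞)) Metric.isOpen_ball).contDiffAt
    (Metric.isOpen_ball.mem_nhds (mem_ball_zero_iff.mpr hz))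
  exact this.restrict_scalars ℝ

/-- the hypergeometric ODE, provided the coefficients satisfy the contiguous recursion. -/
lemma series_ODE (a b c0 : ℂ)
    (hrec : ∀ n : ℕ, ((n : ℂ) + 1) * ((n : ℂ) + c0) * c (n + 1) =
      ((n : ℂ) + a) * ((n : ℂ) + b) * c n)
    {z : ℂ} (hz : ‖z‖ < 1) :
    z * (1 - z) * S2 c z + (c0 - (a + b + 1) * z) * S1 c z - a * b * S0 c z = 0 := by
  have s0 := summable0 hc hr hz
  have s1 := summable1 hc hr hz
  have s2 := summable2 hc hr hz
  set f0 : ℕ → ℂ := fun n => c n * z ^ n with hf0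
  set f1 : ℕ → ℂ := fun n => c n * (n : ℂ) * z ^ (n - 1) with hf1
  set f2 : ℕ → ℂ := fun n => c n * (n : ℂ) * ((n - 1 : ℕ) : ℂ) * z ^ (n - 2) with hf2
  have hU : Summable (fun n : ℕ => z * f2 n + c0 * f1 n) := (s2.mul_left z).add (s1.mul_left c0)
  have E1 : z * S2 c z + c0 * S1 c z = ∑' n : ℕ, (z * f2 n + c0 * f1 n) := by
    rw [S2, S1, ← tsum_mul_left, ← tsum_mul_left, Summable.tsum_add (s2.mul_left z) (s1.mul_left c0)]
  have hV0 : z * f2 0 + c0 * f1 0 = 0 := by simp [hf2, hf1]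
  have hVsucc : ∀ n : ℕ, z * f2 (n + 1) + c0 * f1 (n + 1) =
      c (n + 1) * (((n : ℂ) + 1) * ((n : ℂ) + c0)) * z ^ n := by
    intro n
    rcases n with _ | m
    · simp [hf2, hf1]
      ring
    · simp only [hf2, hf1]
      push_cast
      ring
  have E2 : ∑' n : ℕ, (z * f2 n + c0 * f1 n) =
      ∑' n : ℕ, c (n + 1) * (((n : ℂ) + 1) * ((n : ℂ) + c0)) * z ^ n := by
    rw [Summable.tsum_eq_zero_add hU, hV0, zero_add]
    exact tsum_congr hVsucc
  have E3' : ∀ n : ℕ, c n * (((n : ℂ) + a) * ((n : ℂ) + b)) * z ^ n =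
      z ^ 2 * f2 n + (a + b + 1) * (z * f1 n) + a * b * f0 n := by
    intro n
    rcases n with _ | _ | m
    · simp [hf0, hf1, hf2]
      ring
    · simp [hf0, hf1, hf2]
      ring
    · simp only [hf0, hf1, hf2]
      push_cast
      ring
  have hs2' : Summable (fun n : ℕ => z ^ 2 * f2 n) := s2.mul_left _
  have hs1' : Summable (fun n : ℕ => (a + b + 1) * (z * f1 n)) := (s1.mul_left z).mul_left _
  have hs0' : Summable (fun n : ℕ => a * b * f0 n) := s0.mul_left _
  have E3 : z ^ 2 * S2 c z + (a + b + 1) * (z * S1 c z) + a * b * S0 c z =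
      ∑' n : ℕ, c n * (((n : ℂ) + a) * ((n : ℂ) + b)) * z ^ n := by
    calc z ^ 2 * S2 c z + (a + b + 1) * (z * S1 c z) + a * b * S0 c z
        = ∑' n : ℕ, (z ^ 2 * f2 n + (a + b + 1) * (z * f1 n) + a * b * f0 n) := by
          rw [S2, S1, S0, ← tsum_mul_left (a := z), ← tsum_mul_left (a := z ^ 2),
            ← tsum_mul_left (a := a + b + 1), ← tsum_mul_left (a := a * b),
            ← Summable.tsum_add hs2' hs1', ← Summable.tsum_add (hs2'.add hs1') hs0']
      _ = ∑' n : ℕ, c n * (((n : ℂ) + a) * ((n : ℂ) + b)) * z ^ n :=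
          tsum_congr fun n => (E3' n).symm
  have E4 : (∑' n : ℕ, c (n + 1) * (((n : ℂ) + 1) * ((n : ℂ) + c0)) * z ^ n) =
      ∑' n : ℕ, c n * (((n : ℂ) + a) * ((n : ℂ) + b)) * z ^ n :=
    tsum_congr fun n => by linear_combination z ^ n * hrec n
  linear_combination E1 + E2 - E3 + E4

end KGaux3
namespace KGaux4
open KGaux KGaux2 KGaux3 Filter

lemma poch_succ (x : ℂ) (n : ℕ) : poch x (n + 1) = poch x n * (x + n) := by
  unfold poch
  rw [ascPochhammer_succ_right]
  simp

lemma poch_zero (x : ℂ) : poch x 0 = 1 := by unfold poch; simp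

lemma poch_ne_zero {x : ℂ} (hx : ∀ k : ℕ, x + k ≠ 0) : ∀ n, poch x n ≠ 0 := by
  intro n
  induction n with
  | zero => simp [poch_zero]
  | succ m ih => rw [poch_succ]; exact mul_ne_zero ih (hx m)

/-- the coefficient sequence of `₂F₁(h/2,(h+1)/2;h+1/2; ·)` -/
def cseq (h : ℝ) : ℕ → ℂ := fun n =>
  poch ((h : ℂ) / 2) n * poch (((h : ℂ) + 1) / 2) n / (poch ((h : ℂ) + 1 / 2) n * n.factorial)

lemma hyp2F1_eq_S0 (h : ℝ) (x : ℂ) :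
    hyp2F1 ((h : ℂ) / 2) (((h : ℂ) + 1) / 2) ((h : ℂ) + 1 / 2) x = S0 (cseq h) x := rfl

/-- non-vanishing condition on the parameters -/
def NVC (h : ℝ) : Prop := ∀ n : ℕ,
  ((h : ℂ) / 2 + n ≠ 0) ∧ (((h : ℂ) + 1) / 2 + n ≠ 0) ∧ ((h : ℂ) + 1 / 2 + n ≠ 0)

lemma NVC_of_pos {h : ℝ} (hh : 0 < h) : NVC h := by
  intro n
  refine ⟨?_, ?_, ?_⟩
  · have e : (h : ℂ) / 2 + n = ((h / 2 + n : ℝ) : ℂ) := by push_cast; ring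
    rw [e]
    exact Complex.ofReal_ne_zero.mpr (by positivity)
  · have e : ((h : ℂ) + 1) / 2 + n = (((h + 1) / 2 + n : ℝ) : ℂ) := by push_cast; ring
    rw [e]
    exact Complex.ofReal_ne_zero.mpr (by positivity)
  · have e : (h : ℂ) + 1 / 2 + n = ((h + 1 / 2 + n : ℝ) : ℂ) := by push_cast; ring
    rw [e]
    exact Complex.ofReal_ne_zero.mpr (by positivity)

lemma NVC_of_nonint {h : ℝ} (hh : ∀ m : ℤ, 2 * h ≠ (m : ℝ)) : NVC (1 - h) := by
  intro n
  refine ⟨?_, ?_, ?_⟩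
  · intro hcon
    apply hh (4 * n + 2)
    have e : (((1 - h : ℝ)) : ℂ) / 2 + n = (((1 - h) / 2 + n : ℝ) : ℂ) := by push_cast; ring
    rw [e] at hcon
    have : ((1 - h) / 2 + n : ℝ) = 0 := by exact_mod_cast hcon
    push_cast
    linarith
  · intro hcon
    apply hh (4 * n + 4)
    have e : (((1 - h : ℝ) : ℂ) + 1) / 2 + n = (((1 - h + 1) / 2 + n : ℝ) : ℂ) := by
      push_cast; ring
    rw [e] at hcon
    have : ((1 - h + 1) / 2 + n : ℝ) = 0 := by exact_mod_cast hcon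
    push_cast
    linarith
  · intro hcon
    apply hh (2 * n + 3)
    have e : ((1 - h : ℝ) : ℂ) + 1 / 2 + n = ((1 - h + 1 / 2 + n : ℝ) : ℂ) := by push_cast; ring
    rw [e] at hcon
    have : (1 - h + 1 / 2 + n : ℝ) = 0 := by exact_mod_cast hcon
    push_cast
    linarith

lemma cseq_ne_zero {h : ℝ} (hNV : NVC h) : ∀ n, cseq h n ≠ 0 := by
  intro n
  unfold cseq
  exact div_ne_zero
    (mul_ne_zero (poch_ne_zero (fun k => (hNV k).1) n) (poch_ne_zero (fun k => (hNV k).2.1) n))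
    (mul_ne_zero (poch_ne_zero (fun k => (hNV k).2.2) n)
      (Nat.cast_ne_zero.mpr n.factorial_ne_zero))

lemma cseq_rec {h : ℝ} (hNV : NVC h) : ∀ n : ℕ,
    ((n : ℂ) + 1) * ((n : ℂ) + ((h : ℂ) + 1 / 2)) * cseq h (n + 1) =
    ((n : ℂ) + (h : ℂ) / 2) * ((n : ℂ) + ((h : ℂ) + 1) / 2) * cseq h n := by
  intro n
  unfold cseq
  rw [poch_succ, poch_succ, poch_succ]
  set pa := poch ((h : ℂ) / 2) n with hpa
  set pb := poch (((h : ℂ) + 1) / 2) n with hpb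
  set pc := poch ((h : ℂ) + 1 / 2) n with hpc
  have h1 : pc ≠ 0 := poch_ne_zero (fun k => (hNV k).2.2) n
  have h2 : (h : ℂ) + 1 / 2 + (n : ℂ) ≠ 0 := (hNV n).2.2
  have h3 : ((n.factorial : ℕ) : ℂ) ≠ 0 := Nat.cast_ne_zero.mpr n.factorial_ne_zero
  have h3' : (((n + 1).factorial : ℕ) : ℂ) ≠ 0 := Nat.cast_ne_zero.mpr (n + 1).factorial_ne_zero
  have hfa : (((n + 1).factorial : ℕ) : ℂ) = ((n : ℂ) + 1) * n.factorial := by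
    push_cast [Nat.factorial_succ]
    ring
  rw [← mul_div_assoc, ← mul_div_assoc,
    div_eq_div_iff (mul_ne_zero (mul_ne_zero h1 h2) h3') (mul_ne_zero h1 h3), hfa]
  ring

lemma cseq_ratio {h : ℝ} (hNV : NVC h) :
    Tendsto (fun n => ‖cseq h (n + 1)‖ / ‖cseq h n‖) atTop (nhds 1) := by
  have hone : ∀ n : ℕ, (1 : ℂ) + n ≠ 0 := by
    intro n
    have e : (1 : ℂ) + n = (((n + 1 : ℕ)) : ℂ) := by push_cast; ring
    rw [e]
    exact Nat.cast_ne_zero.mpr (Nat.succ_ne_zero n)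
  have hc0 : ∀ n : ℕ, ((h : ℂ) + 1 / 2) + n ≠ 0 := fun n => (hNV n).2.2
  have key : ∀ n : ℕ, ‖cseq h (n + 1)‖ / ‖cseq h n‖ =
      ‖((h : ℂ) / 2 + n) / (1 + n)‖ * ‖((((h : ℂ) + 1) / 2) + n) / (((h : ℂ) + 1 / 2) + n)‖ := by
    intro n
    have h1 : cseq h (n + 1) =
        ((h : ℂ) / 2 + n) * ((((h : ℂ) + 1) / 2) + n) * cseq h n /
          ((1 + n) * (((h : ℂ) + 1 / 2) + n)) := by
      rw [eq_div_iff (mul_ne_zero (hone n) (hc0 n))]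
      linear_combination cseq_rec hNV n
    have hcn := cseq_ne_zero hNV n
    have h2 : cseq h (n + 1) / cseq h n =
        ((h : ℂ) / 2 + n) / (1 + n) * (((((h : ℂ) + 1) / 2) + n) / (((h : ℂ) + 1 / 2) + n)) := by
      rw [h1, div_div, mul_div_mul_right _ _ hcn, div_mul_div_comm]
    rw [← norm_div, h2, norm_mul]
  simp only [key]
  have t1 : Tendsto (fun n : ℕ => ‖((h : ℂ) / 2 + n) / (1 + n)‖) atTop (nhds 1) := by
    have := (tendsto_ratio ((h : ℂ) / 2) 1 hone).norm
    simpa using this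
  have t2 : Tendsto (fun n : ℕ => ‖((((h : ℂ) + 1) / 2) + n) / (((h : ℂ) + 1 / 2) + n)‖)
      atTop (nhds 1) := by
    have := (tendsto_ratio (((h : ℂ) + 1) / 2) ((h : ℂ) + 1 / 2) hc0).norm
    simpa using this
  have := t1.mul t2
  simpa using this

end KGaux4
namespace KGaux5
open KGaux KGaux2 KGaux3 KGaux4 Filter

/-- radial part of the propagator -/
def gfun (h : ℝ) (x : ℝ) : ℂ := (((x / 2) ^ h : ℝ) : ℂ) * S0 (cseq h) ((x : ℂ) ^ 2)

def gd1 (h : ℝ) (x : ℝ) : ℂ :=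
  ((h * (x / 2) ^ (h - 1) * (1 / 2) : ℝ) : ℂ) * S0 (cseq h) ((x : ℂ) ^ 2) +
    (((x / 2) ^ h : ℝ) : ℂ) * (S1 (cseq h) ((x : ℂ) ^ 2) * (2 * (x : ℂ)))

def gd2 (h : ℝ) (x : ℝ) : ℂ :=
  ((h * ((h - 1) * (x / 2) ^ (h - 1 - 1) * (1 / 2)) * (1 / 2) : ℝ) : ℂ) * S0 (cseq h) ((x : ℂ) ^ 2) +
    ((h * (x / 2) ^ (h - 1) * (1 / 2) : ℝ) : ℂ) * (S1 (cseq h) ((x : ℂ) ^ 2) * (2 * (x : ℂ))) +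
  (((h * (x / 2) ^ (h - 1) * (1 / 2) : ℝ) : ℂ) * (S1 (cseq h) ((x : ℂ) ^ 2) * (2 * (x : ℂ))) +
    (((x / 2) ^ h : ℝ) : ℂ) *
      (S2 (cseq h) ((x : ℂ) ^ 2) * (2 * (x : ℂ)) * (2 * (x : ℂ)) +
        S1 (cseq h) ((x : ℂ) ^ 2) * 2))

lemma hasDerivAt_halfpow (p : ℝ) {x : ℝ} (hx : x ≠ 0) :
    HasDerivAt (fun y : ℝ => (y / 2) ^ p) (p * (x / 2) ^ (p - 1) * (1 / 2)) x := by
  have hinner : HasDerivAt (fun y : ℝ => y / 2) ((1 : ℝ) / 2) x := by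
    simpa using (hasDerivAt_id x).div_const 2
  have houter := Real.hasDerivAt_rpow_const (x := x / 2) (p := p)
    (Or.inl (div_ne_zero hx two_ne_zero))
  have := houter.comp x hinner
  simpa [Function.comp_def] using this

lemma norm_sq_lt_one {x : ℝ} (hx : 0 < x) (hx1 : x < 1) : ‖((x : ℂ)) ^ 2‖ < 1 := by
  rw [norm_pow, Complex.norm_real]
  rw [Real.norm_eq_abs, abs_of_pos hx]
  nlinarith

variable {c : ℕ → ℂ} (hc : ∀ n, c n ≠ 0)
  (hr : Tendsto (fun n => ‖c (n + 1)‖ / ‖c n‖) atTop (nhds 1))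
include hc hr

lemma hasDerivAt_S0sq {x : ℝ} (hx2 : ‖((x : ℂ)) ^ 2‖ < 1) :
    HasDerivAt (fun y : ℝ => S0 c ((y : ℂ) ^ 2)) (S1 c ((x : ℂ) ^ 2) * (2 * (x : ℂ))) x := by
  have hpow : HasDerivAt (fun w : ℂ => w ^ 2) (2 * (x : ℂ)) (x : ℂ) := by
    simpa using hasDerivAt_pow 2 (x : ℂ)
  have h1 := (hasDerivAt_S0 hc hr hx2).comp ((x : ℝ) : ℂ) hpow
  have h2 : HasDerivAt (fun w : ℂ => S0 c (w ^ 2)) (S1 c ((x : ℂ) ^ 2) * (2 * (x : ℂ))) (x : ℂ) := by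
    simpa [Function.comp_def] using h1
  exact h2.comp_ofReal

lemma hasDerivAt_S1sq {x : ℝ} (hx2 : ‖((x : ℂ)) ^ 2‖ < 1) :
    HasDerivAt (fun y : ℝ => S1 c ((y : ℂ) ^ 2)) (S2 c ((x : ℂ) ^ 2) * (2 * (x : ℂ))) x := by
  have hpow : HasDerivAt (fun w : ℂ => w ^ 2) (2 * (x : ℂ)) (x : ℂ) := by
    simpa using hasDerivAt_pow 2 (x : ℂ)
  have h1 := (hasDerivAt_S1 hc hr hx2).comp ((x : ℝ) : ℂ) hpow
  have h2 : HasDerivAt (fun w : ℂ => S1 c (w ^ 2)) (S2 c ((x : ℂ) ^ 2) * (2 * (x : ℂ))) (x : ℂ) := by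
    simpa [Function.comp_def] using h1
  exact h2.comp_ofReal

omit hc hr

lemma gfun_hasDeriv (h : ℝ) (hNV : NVC h) {x : ℝ} (hx : 0 < x) (hx1 : x < 1) :
    HasDerivAt (gfun h) (gd1 h x) x := by
  have hc := cseq_ne_zero hNV
  have hr := cseq_ratio hNV
  have hx2 := norm_sq_lt_one hx hx1
  have hA := (hasDerivAt_halfpow h (ne_of_gt hx)).ofReal_comp
  have hB := hasDerivAt_S0sq hc hr hx2
  have := hA.mul hB
  exact this

lemma gd1_hasDeriv (h : ℝ) (hNV : NVC h) {x : ℝ} (hx : 0 < x) (hx1 : x < 1) :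
    HasDerivAt (gd1 h) (gd2 h x) x := by
  have hc := cseq_ne_zero hNV
  have hr := cseq_ratio hNV
  have hx2 := norm_sq_lt_one hx hx1
  have hA1 : HasDerivAt (fun y : ℝ => ((h * (y / 2) ^ (h - 1) * (1 / 2) : ℝ) : ℂ))
      ((h * ((h - 1) * (x / 2) ^ (h - 1 - 1) * (1 / 2)) * (1 / 2) : ℝ) : ℂ) x :=
    (((hasDerivAt_halfpow (h - 1) (ne_of_gt hx)).const_mul h).mul_const (1 / 2)).ofReal_comp
  have hB1 := hasDerivAt_S0sq hc hr hx2
  have hA2 := (hasDerivAt_halfpow h (ne_of_gt hx)).ofReal_comp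
  have hlin : HasDerivAt (fun y : ℝ => 2 * (y : ℂ)) 2 x := by
    simpa using ((hasDerivAt_id x).ofReal_comp).const_mul (2 : ℂ)
  have hB2 : HasDerivAt (fun y : ℝ => S1 (cseq h) ((y : ℂ) ^ 2) * (2 * (y : ℂ)))
      (S2 (cseq h) ((x : ℂ) ^ 2) * (2 * (x : ℂ)) * (2 * (x : ℂ)) +
        S1 (cseq h) ((x : ℂ) ^ 2) * 2) x := by
    have := (hasDerivAt_S1sq hc hr hx2).mul hlin
    simpa [Pi.mul_def] using this
  exact (hA1.mul hB1).add (hA2.mul hB2)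

lemma gODE (h : ℝ) (hNV : NVC h) {x : ℝ} (hx : 0 < x) (hx1 : x < 1) :
    ((x : ℂ)) ^ 2 * (1 - ((x : ℂ)) ^ 2) * gd2 h x - 2 * ((x : ℂ)) ^ 3 * gd1 h x =
      (h : ℂ) * ((h : ℂ) - 1) * gfun h x := by
  have hx2 := norm_sq_lt_one hx hx1
  have hODE := series_ODE (cseq_ne_zero hNV) (cseq_ratio hNV)
    ((h : ℂ) / 2) (((h : ℂ) + 1) / 2) ((h : ℂ) + 1 / 2) (cseq_rec hNV) hx2
  have hne : (x / 2 : ℝ) ≠ 0 := by positivity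
  have hQ : ((x / 2) ^ (h - 1) : ℝ) * (x / 2) = (x / 2) ^ h := by
    have := (Real.rpow_add_one hne (h - 1)).symm
    rwa [sub_add_cancel] at this
  have hR : ((x / 2) ^ (h - 1 - 1) : ℝ) * (x / 2) = (x / 2) ^ (h - 1) := by
    have := (Real.rpow_add_one hne (h - 1 - 1)).symm
    rwa [sub_add_cancel] at this
  have hQc := congrArg (Complex.ofReal) hQ
  have hRc := congrArg (Complex.ofReal) hR
  push_cast at hQc hRc
  set X : ℂ := (x : ℂ) with hX
  set A := S0 (cseq h) (X ^ 2) with hA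
  set B := S1 (cseq h) (X ^ 2) with hB
  set C := S2 (cseq h) (X ^ 2) with hC
  set P : ℂ := (((x / 2) ^ h : ℝ) : ℂ) with hP
  set Q : ℂ := (((x / 2) ^ (h - 1) : ℝ) : ℂ) with hQ2
  set R : ℂ := (((x / 2) ^ (h - 1 - 1) : ℝ) : ℂ) with hR2
  set H : ℂ := ((h : ℝ) : ℂ) with hH
  unfold gd1 gd2 gfun
  push_cast
  linear_combination (4 * X ^ 2 * P) * hODE +
    (H * (H - 1) * (1 - X ^ 2) * A + 4 * H * X ^ 2 * (1 - X ^ 2) * B - 2 * H * X ^ 2 * A) * hQc +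
    ((H * (H - 1) / 2) * X * (1 - X ^ 2) * A) * hRc

end KGaux5
namespace KGaux6
open KGaux3 KGaux4 KGaux5

/-- denominator -/
def Dd (u' z' u z : ℝ) : ℝ := u ^ 2 + u' ^ 2 + (z - z') ^ 2
/-- real chordal variable -/
def xiR (u' z' u z : ℝ) : ℝ := 2 * u * u' / Dd u' z' u z
def xiU (u' z' u z : ℝ) : ℝ :=
  2 * u' * (u' ^ 2 + (z - z') ^ 2 - u ^ 2) / (Dd u' z' u z) ^ 2
def xiUU (u' z' u z : ℝ) : ℝ :=
  (2 * u' * (-(2 * u)) * Dd u' z' u z - 8 * u * u' * (u' ^ 2 + (z - z') ^ 2 - u ^ 2)) /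
    (Dd u' z' u z) ^ 3
def xiZ (u' z' u z : ℝ) : ℝ := -(4 * u * u' * (z - z')) / (Dd u' z' u z) ^ 2
def xiZZ (u' z' u z : ℝ) : ℝ :=
  (-(4 * u * u') * Dd u' z' u z + 16 * u * u' * (z - z') ^ 2) / (Dd u' z' u z) ^ 3

variable {u' z' : ℝ} (hu' : 0 < u')
include hu'

lemma Dd_pos (u z : ℝ) : 0 < Dd u' z' u z := by
  unfold Dd
  have h1 : 0 < u' ^ 2 := by positivity
  nlinarith [sq_nonneg u, sq_nonneg (z - z')]

lemma xiU_deriv (u z : ℝ) : HasDerivAt (fun s => xiR u' z' s z) (xiU u' z' u z) u := by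
  have hnum : HasDerivAt (fun s : ℝ => 2 * s * u') (2 * u') u := by
    simpa using ((hasDerivAt_id u).const_mul (2 : ℝ)).mul_const u'
  have hden : HasDerivAt (fun s : ℝ => s ^ 2 + u' ^ 2 + (z - z') ^ 2) (2 * u) u := by
    simpa using ((hasDerivAt_pow 2 u).add_const (u' ^ 2)).add_const ((z - z') ^ 2)
  have hDne : (u ^ 2 + u' ^ 2 + (z - z') ^ 2) ≠ 0 := ne_of_gt (Dd_pos hu' u z)
  have hdiv := hnum.div hden hDne
  have hval : (2 * u' * (u ^ 2 + u' ^ 2 + (z - z') ^ 2) - 2 * u * u' * (2 * u)) /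
      (u ^ 2 + u' ^ 2 + (z - z') ^ 2) ^ 2 = xiU u' z' u z := by
    unfold xiU Dd
    field_simp
    ring
  rw [← hval]
  exact hdiv

lemma xiUU_deriv (u z : ℝ) : HasDerivAt (fun s => xiU u' z' s z) (xiUU u' z' u z) u := by
  have hnum : HasDerivAt (fun s : ℝ => 2 * u' * (u' ^ 2 + (z - z') ^ 2 - s ^ 2))
      (2 * u' * (-(2 * u))) u := by
    have h1 : HasDerivAt (fun s : ℝ => u' ^ 2 + (z - z') ^ 2 - s ^ 2) (-(2 * u)) u := by
      simpa using (hasDerivAt_pow 2 u).const_sub (u' ^ 2 + (z - z') ^ 2)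
    simpa [mul_comm] using h1.const_mul (2 * u')
  have hden0 : HasDerivAt (fun s : ℝ => s ^ 2 + u' ^ 2 + (z - z') ^ 2) (2 * u) u := by
    simpa using ((hasDerivAt_pow 2 u).add_const (u' ^ 2)).add_const ((z - z') ^ 2)
  have hden := hden0.pow 2
  have hDne : (u ^ 2 + u' ^ 2 + (z - z') ^ 2) ≠ 0 := ne_of_gt (Dd_pos hu' u z)
  have hDne2 : ((u ^ 2 + u' ^ 2 + (z - z') ^ 2) ^ 2) ≠ 0 := pow_ne_zero 2 hDne
  have hdiv := hnum.div hden hDne2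
  have hval : (2 * u' * (-(2 * u)) * ((u ^ 2 + u' ^ 2 + (z - z') ^ 2) ^ 2) -
      2 * u' * (u' ^ 2 + (z - z') ^ 2 - u ^ 2) *
        ((2 : ℕ) * (u ^ 2 + u' ^ 2 + (z - z') ^ 2) ^ (2 - 1) * (2 * u))) /
      ((u ^ 2 + u' ^ 2 + (z - z') ^ 2) ^ 2) ^ 2 = xiUU u' z' u z := by
    unfold xiUU Dd
    field_simp
    ring
  rw [← hval]
  exact hdiv

lemma xiZ_deriv (u z : ℝ) : HasDerivAt (fun t => xiR u' z' u t) (xiZ u' z' u z) z := by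
  have hnum : HasDerivAt (fun _ : ℝ => 2 * u * u') (0 : ℝ) z := hasDerivAt_const z _
  have hden : HasDerivAt (fun t : ℝ => u ^ 2 + u' ^ 2 + (t - z') ^ 2) (2 * (z - z')) z := by
    have h1 : HasDerivAt (fun t : ℝ => (t - z') ^ 2) (2 * (z - z')) z := by
      simpa [Pi.pow_def] using (((hasDerivAt_id z).sub_const z').pow 2)
    simpa using h1.const_add (u ^ 2 + u' ^ 2)
  have hDne : (u ^ 2 + u' ^ 2 + (z - z') ^ 2) ≠ 0 := ne_of_gt (Dd_pos hu' u z)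
  have hdiv := hnum.div hden hDne
  have hval : ((0 : ℝ) * (u ^ 2 + u' ^ 2 + (z - z') ^ 2) - 2 * u * u' * (2 * (z - z'))) /
      (u ^ 2 + u' ^ 2 + (z - z') ^ 2) ^ 2 = xiZ u' z' u z := by
    unfold xiZ Dd
    field_simp
    ring
  rw [← hval]
  exact hdiv

lemma xiZZ_deriv (u z : ℝ) : HasDerivAt (fun t => xiZ u' z' u t) (xiZZ u' z' u z) z := by
  have hnum : HasDerivAt (fun t : ℝ => -(4 * u * u' * (t - z'))) (-(4 * u * u')) z := by
    have h1 : HasDerivAt (fun t : ℝ => t - z') 1 z := (hasDerivAt_id z).sub_const z'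
    simpa [Pi.neg_def] using (h1.const_mul (4 * u * u')).neg
  have hden0 : HasDerivAt (fun t : ℝ => u ^ 2 + u' ^ 2 + (t - z') ^ 2) (2 * (z - z')) z := by
    have h1 : HasDerivAt (fun t : ℝ => (t - z') ^ 2) (2 * (z - z')) z := by
      simpa [Pi.pow_def] using (((hasDerivAt_id z).sub_const z').pow 2)
    simpa using h1.const_add (u ^ 2 + u' ^ 2)
  have hden := hden0.pow 2
  have hDne : (u ^ 2 + u' ^ 2 + (z - z') ^ 2) ≠ 0 := ne_of_gt (Dd_pos hu' u z)
  have hDne2 : ((u ^ 2 + u' ^ 2 + (z - z') ^ 2) ^ 2) ≠ 0 := pow_ne_zero 2 hDne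
  have hdiv := hnum.div hden hDne2
  have hval : (-(4 * u * u') * ((u ^ 2 + u' ^ 2 + (z - z') ^ 2) ^ 2) -
      -(4 * u * u' * (z - z')) *
        ((2 : ℕ) * (u ^ 2 + u' ^ 2 + (z - z') ^ 2) ^ (2 - 1) * (2 * (z - z')))) /
      ((u ^ 2 + u' ^ 2 + (z - z') ^ 2) ^ 2) ^ 2 = xiZZ u' z' u z := by
    unfold xiZZ Dd
    field_simp
    ring
  rw [← hval]
  exact hdiv

lemma keyI1 (u z : ℝ) :
    u ^ 2 * ((xiU u' z' u z) ^ 2 + (xiZ u' z' u z) ^ 2) =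
      (xiR u' z' u z) ^ 2 * (1 - (xiR u' z' u z) ^ 2) := by
  have hDne : Dd u' z' u z ≠ 0 := ne_of_gt (Dd_pos hu' u z)
  unfold xiU xiZ xiR Dd at *
  field_simp
  ring

lemma keyI2 (u z : ℝ) :
    u ^ 2 * (xiUU u' z' u z + xiZZ u' z' u z) = -2 * (xiR u' z' u z) ^ 3 := by
  have hDne : Dd u' z' u z ≠ 0 := ne_of_gt (Dd_pos hu' u z)
  unfold xiUU xiZZ xiR Dd at *
  field_simp
  ring

lemma xiR_pos {u : ℝ} (hu : 0 < u) (z : ℝ) : 0 < xiR u' z' u z :=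
  div_pos (by positivity) (Dd_pos hu' u z)

lemma xiR_nonneg {u : ℝ} (hu : 0 < u) (z : ℝ) : 0 ≤ xiR u' z' u z := (xiR_pos hu' hu z).le

lemma xiR_lt_one {u z : ℝ} (hu : 0 < u) (hne : (u, z) ≠ (u', z')) : xiR u' z' u z < 1 := by
  rw [xiR, div_lt_one (Dd_pos hu' u z)]
  have hor : u ≠ u' ∨ z ≠ z' := by
    by_contra hcon
    push_neg at hcon
    exact hne (by rw [hcon.1, hcon.2])
  have h5 : 0 < (u - u') ^ 2 + (z - z') ^ 2 := by
    rcases hor with h | h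
    · have h6 : (u - u') ^ 2 ≠ 0 := pow_ne_zero 2 (sub_ne_zero.mpr h)
      have h7 : 0 < (u - u') ^ 2 := lt_of_le_of_ne (sq_nonneg _) (Ne.symm h6)
      nlinarith [sq_nonneg (z - z')]
    · have h6 : (z - z') ^ 2 ≠ 0 := pow_ne_zero 2 (sub_ne_zero.mpr h)
      have h7 : 0 < (z - z') ^ 2 := lt_of_le_of_ne (sq_nonneg _) (Ne.symm h6)
      nlinarith [sq_nonneg (u - u')]
  unfold Dd
  nlinarith

omit hu'

lemma chordal_eq (u' z' u z : ℝ) :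
    chordal u (z : ℂ) u' (z' : ℂ) = ((xiR u' z' u z : ℝ) : ℂ) := by
  unfold chordal xiR Dd
  push_cast
  ring

lemma Gbb_eq (h : ℝ) {u : ℝ} (z : ℝ) (hu : 0 < u) (hu' : 0 < u') :
    Gbb h u (z : ℂ) u' (z' : ℂ) = gfun h (xiR u' z' u z) := by
  unfold Gbb gfun
  rw [chordal_eq u' z' u z]
  have hnn : (0 : ℝ) ≤ xiR u' z' u z / 2 := by
    have := xiR_nonneg hu' hu (z' := z') z
    linarith
  have h1 : (((xiR u' z' u z : ℝ) : ℂ) / 2) ^ ((h : ℝ) : ℂ) =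
      (((xiR u' z' u z / 2) ^ h : ℝ) : ℂ) := by
    rw [show (((xiR u' z' u z : ℝ) : ℂ) / 2) = ((xiR u' z' u z / 2 : ℝ) : ℂ) by push_cast; ring]
    rw [← Complex.ofReal_cpow hnn h]
  rw [h1, hyp2F1_eq_S0]

end KGaux6
namespace KGaux7
open KGaux3 KGaux4 KGaux5 KGaux6 Filter Set

lemma iter2 {f d1 : ℝ → ℂ} {W : Set ℝ} {u : ℝ} {v : ℂ} (hW : IsOpen W) (hu : u ∈ W)
    (h1 : ∀ s ∈ W, HasDerivAt f (d1 s) s) (h2 : HasDerivAt d1 v u) :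
    iteratedDeriv 2 f u = v := by
  have hev : deriv f =ᶠ[nhds u] d1 := by
    filter_upwards [hW.mem_nhds hu] with s hs using (h1 s hs).deriv
  show iteratedDeriv (1 + 1) f u = v
  rw [iteratedDeriv_succ, iteratedDeriv_one]
  calc deriv (deriv f) u = deriv d1 u := hev.deriv_eq
    _ = v := h2.deriv

/-- the key derivative package for one bulk-to-bulk propagator -/
lemma mainSlices (h' : ℝ) (hNV : NVC h') {u' z' : ℝ} (hu' : 0 < u') {u z : ℝ} (hu : 0 < u)
    (hne : (u, z) ≠ (u', z')) :
    ∃ (W1 W2 : Set ℝ) (d1 d2 : ℝ → ℂ) (v1 v2 : ℂ),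
      IsOpen W1 ∧ u ∈ W1 ∧ IsOpen W2 ∧ z ∈ W2 ∧
      (∀ s ∈ W1, HasDerivAt (fun σ : ℝ => Gbb h' σ (z : ℂ) u' (z' : ℂ)) (d1 s) s) ∧
      (∀ t ∈ W2, HasDerivAt (fun τ : ℝ => Gbb h' u (τ : ℂ) u' (z' : ℂ)) (d2 t) t) ∧
      HasDerivAt d1 v1 u ∧ HasDerivAt d2 v2 z ∧
      (u : ℂ) ^ 2 * (v1 + v2) =
        (h' : ℂ) * ((h' : ℂ) - 1) * Gbb h' u (z : ℂ) u' (z' : ℂ) := by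
  have hx0 : 0 < xiR u' z' u z := xiR_pos hu' hu z
  have hx1 : xiR u' z' u z < 1 := xiR_lt_one hu' hu hne
  refine ⟨{s : ℝ | 0 < s ∧ (s, z) ≠ (u', z')}, {t : ℝ | (u, t) ≠ (u', z')},
    (fun s => ((xiU u' z' s z : ℝ) : ℂ) * gd1 h' (xiR u' z' s z)),
    (fun t => ((xiZ u' z' u t : ℝ) : ℂ) * gd1 h' (xiR u' z' u t)),
    ((xiUU u' z' u z : ℝ) : ℂ) * gd1 h' (xiR u' z' u z) +
      ((xiU u' z' u z : ℝ) : ℂ) * (((xiU u' z' u z : ℝ) : ℂ) * gd2 h' (xiR u' z' u z)),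
    ((xiZZ u' z' u z : ℝ) : ℂ) * gd1 h' (xiR u' z' u z) +
      ((xiZ u' z' u z : ℝ) : ℂ) * (((xiZ u' z' u z : ℝ) : ℂ) * gd2 h' (xiR u' z' u z)),
    ?_, ⟨hu, hne⟩, ?_, hne, ?_, ?_, ?_, ?_, ?_⟩
  · exact IsOpen.inter (isOpen_lt continuous_const continuous_id)
      (IsOpen.preimage (continuous_id.prodMk continuous_const) isOpen_compl_singleton)
  · exact IsOpen.preimage (continuous_const.prodMk continuous_id) isOpen_compl_singleton
  · -- u-slice first derivative
    intro s hs
    obtain ⟨hs0, hsne⟩ := hs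
    have hg := gfun_hasDeriv h' hNV (xiR_pos hu' hs0 z) (xiR_lt_one hu' hs0 hsne)
    have hcomp := hg.scomp s (xiU_deriv (z' := z') hu' s z)
    rw [Complex.real_smul] at hcomp
    apply hcomp.congr_of_eventuallyEq
    filter_upwards [isOpen_lt continuous_const continuous_id |>.mem_nhds hs0] with σ hσ
    exact Gbb_eq h' z hσ hu'
  · -- z-slice first derivative
    intro t ht
    have hg := gfun_hasDeriv h' hNV (xiR_pos hu' hu t) (xiR_lt_one hu' hu ht)
    have hcomp := hg.scomp t (xiZ_deriv (z' := z') hu' u t)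
    rw [Complex.real_smul] at hcomp
    apply hcomp.congr_of_eventuallyEq
    apply Eventually.of_forall
    intro τ
    exact Gbb_eq h' τ hu hu'
  · -- u-slice second derivative
    have hA := (xiUU_deriv (z' := z') hu' u z).ofReal_comp
    have hB := (gd1_hasDeriv h' hNV hx0 hx1).scomp u (xiU_deriv (z' := z') hu' u z)
    rw [Complex.real_smul] at hB
    exact hA.mul hB
  · -- z-slice second derivative
    have hA := (xiZZ_deriv (z' := z') hu' u z).ofReal_comp
    have hB := (gd1_hasDeriv h' hNV hx0 hx1).scomp z (xiZ_deriv (z' := z') hu' u z)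
    rw [Complex.real_smul] at hB
    exact hA.mul hB
  · -- the Klein-Gordon equation
    have i1c := congrArg (Complex.ofReal) (keyI1 hu' (z' := z') u z)
    have i2c := congrArg (Complex.ofReal) (keyI2 hu' (z' := z') u z)
    push_cast at i1c i2c
    have ode := gODE h' hNV hx0 hx1
    rw [Gbb_eq h' z hu hu']
    linear_combination (gd2 h' (xiR u' z' u z)) * i1c + (gd1 h' (xiR u' z' u z)) * i2c + ode

end KGaux7
namespace KGaux8
open KGaux3 KGaux4 KGaux5 KGaux6 KGaux7 Filter Set

lemma smoothness (h : ℝ) (hNV : NVC h) {u' : ℝ} (z' : ℝ) (hu' : 0 < u') :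
    ContDiffOn ℝ (⊤ : ℕ∞) (fun p : ℝ × ℝ => Gbb h p.1 (p.2 : ℂ) u' (z' : ℂ))
      {p : ℝ × ℝ | 0 < p.1 ∧ p ≠ (u', z')} := by
  have hc := cseq_ne_zero hNV
  have hr := cseq_ratio hNV
  have hsm : ContDiffOn ℝ (⊤ : ℕ∞) (fun p : ℝ × ℝ => gfun h (xiR u' z' p.1 p.2))
      {p : ℝ × ℝ | 0 < p.1 ∧ p ≠ (u', z')} := by
    intro q hq
    obtain ⟨hq1, hq2⟩ := hq
    have hx0 : 0 < xiR u' z' q.1 q.2 := xiR_pos hu' hq1 q.2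
    have hx1 : xiR u' z' q.1 q.2 < 1 := xiR_lt_one hu' hq1 (by rw [Prod.mk.eta]; exact hq2)
    have hcxi : ContDiffAt ℝ (⊤ : ℕ∞) (fun p : ℝ × ℝ => xiR u' z' p.1 p.2) q := by
      have hnum : ContDiff ℝ (⊤ : ℕ∞) (fun p : ℝ × ℝ => 2 * p.1 * u') :=
        (contDiff_const.mul contDiff_fst).mul contDiff_const
      have hden : ContDiff ℝ (⊤ : ℕ∞) (fun p : ℝ × ℝ => p.1 ^ 2 + u' ^ 2 + (p.2 - z') ^ 2) :=
        ((contDiff_fst.pow 2).add contDiff_const).add ((contDiff_snd.sub contDiff_const).pow 2)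
      exact hnum.contDiffAt.div hden.contDiffAt (ne_of_gt (Dd_pos hu' q.1 q.2))
    have hrpow : ContDiffAt ℝ (⊤ : ℕ∞) (fun p : ℝ × ℝ => (xiR u' z' p.1 p.2 / 2) ^ h) q :=
      (hcxi.div_const 2).rpow_const_of_ne (by positivity)
    have hofReal1 : ContDiffAt ℝ (⊤ : ℕ∞)
        (fun p : ℝ × ℝ => (((xiR u' z' p.1 p.2 / 2) ^ h : ℝ) : ℂ)) q := by
      have := (Complex.ofRealCLM.contDiff (n := ((⊤ : ℕ∞) : WithTop ℕ∞))).contDiffAt.comp q hrpow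
      simpa [Function.comp_def] using this
    have hinner : ContDiffAt ℝ (⊤ : ℕ∞)
        (fun p : ℝ × ℝ => ((xiR u' z' p.1 p.2 : ℝ) : ℂ) ^ 2) q := by
      have h1 : ContDiffAt ℝ (⊤ : ℕ∞) (fun p : ℝ × ℝ => ((xiR u' z' p.1 p.2 : ℝ) : ℂ)) q := by
        have := (Complex.ofRealCLM.contDiff (n := ((⊤ : ℕ∞) : WithTop ℕ∞))).contDiffAt.comp q hcxi
        simpa [Function.comp_def] using this
      exact h1.pow 2
    have houter : ContDiffAt ℝ (⊤ : ℕ∞) (S0 (cseq h)) (((xiR u' z' q.1 q.2 : ℝ) : ℂ) ^ 2) :=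
      contDiffAt_S0 hc hr (norm_sq_lt_one hx0 hx1)
    have hS0p : ContDiffAt ℝ (⊤ : ℕ∞)
        (fun p : ℝ × ℝ => S0 (cseq h) (((xiR u' z' p.1 p.2 : ℝ) : ℂ) ^ 2)) q := by
      have := houter.comp q hinner
      simpa [Function.comp_def] using this
    exact ((hofReal1.mul hS0p)).contDiffWithinAt
  apply hsm.congr
  intro q hq
  exact Gbb_eq h q.2 hq.1 hu'

/-- decomposition of the modified propagator -/
lemma Gtilde_decomp (h : ℝ) (u : ℝ) (z : ℂ) (u' : ℝ) (z' : ℂ) :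
    Gtilde h u z u' z' =
      ((-2 * Complex.I / (4 : ℂ) ^ ((h : ℝ) : ℂ)) *
          (Complex.Gamma (2 * h) / Complex.Gamma h ^ 2) *
          (Complex.Gamma (1 - 2 * h) / Complex.Gamma (1 - ((h : ℝ) : ℂ)) ^ 2)) *
        Gbb h u z u' z' +
      ((-2 * Complex.I / (4 : ℂ) ^ ((h : ℝ) : ℂ)) *
          (Complex.Gamma (2 * h) / Complex.Gamma h ^ 2) *
          (Complex.Gamma (2 * h - 1) / Complex.Gamma h ^ 2)) *
        Gbb (1 - h) u z u' z' := by
  unfold Gtilde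
  ring

end KGaux8
/-- the bulk-to-bulk propagator solves the homogeneous Klein–Gordon
equation away from the coincident point; `G_{1-h}` solves the same equation (for
`0 < h < 1`), and hence for `2h ∉ ℤ` so does the modified propagator `G̃_h`. -/
theorem Gbb_solves_KleinGordon (h : ℝ) (hh : 0 < h) (u' z' : ℝ) (hu' : 0 < u') :
    ContDiffOn ℝ (⊤ : ℕ∞)
      (fun p : ℝ × ℝ => Gbb h p.1 (p.2 : ℂ) u' (z' : ℂ))
      {p : ℝ × ℝ | 0 < p.1 ∧ p ≠ (u', z')} ∧
    (∀ p : ℝ × ℝ, 0 < p.1 → p ≠ (u', z') →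
      (p.1 : ℂ) ^ 2 *
          (iteratedDeriv 2 (fun s : ℝ => Gbb h s (p.2 : ℂ) u' (z' : ℂ)) p.1 +
            iteratedDeriv 2 (fun t : ℝ => Gbb h p.1 (t : ℂ) u' (z' : ℂ)) p.2) =
        (h : ℂ) * ((h : ℂ) - 1) * Gbb h p.1 (p.2 : ℂ) u' (z' : ℂ)) ∧
    (h < 1 → ∀ p : ℝ × ℝ, 0 < p.1 → p ≠ (u', z') →
      (p.1 : ℂ) ^ 2 *
          (iteratedDeriv 2 (fun s : ℝ => Gbb (1 - h) s (p.2 : ℂ) u' (z' : ℂ)) p.1 +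
            iteratedDeriv 2 (fun t : ℝ => Gbb (1 - h) p.1 (t : ℂ) u' (z' : ℂ)) p.2) =
        (h : ℂ) * ((h : ℂ) - 1) * Gbb (1 - h) p.1 (p.2 : ℂ) u' (z' : ℂ)) ∧
    ((∀ m : ℤ, 2 * h ≠ (m : ℝ)) → ∀ p : ℝ × ℝ, 0 < p.1 → p ≠ (u', z') →
      (p.1 : ℂ) ^ 2 *
          (iteratedDeriv 2 (fun s : ℝ => Gtilde h s (p.2 : ℂ) u' (z' : ℂ)) p.1 +
            iteratedDeriv 2 (fun t : ℝ => Gtilde h p.1 (t : ℂ) u' (z' : ℂ)) p.2) =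
        (h : ℂ) * ((h : ℂ) - 1) * Gtilde h p.1 (p.2 : ℂ) u' (z' : ℂ)) := by
  have hNVh := KGaux4.NVC_of_pos hh
  refine ⟨KGaux8.smoothness h hNVh z' hu', ?_, ?_, ?_⟩
  · intro p hp hne
    obtain ⟨W1, W2, d1, d2, v1, v2, hW1, hu1, hW2, hz2, hS1, hS2, hd1, hd2, hpde⟩ :=
      KGaux7.mainSlices h hNVh hu' hp (by rw [Prod.mk.eta]; exact hne)
    rw [KGaux7.iter2 hW1 hu1 hS1 hd1, KGaux7.iter2 hW2 hz2 hS2 hd2]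
    exact hpde
  · intro h1 p hp hne
    have hNV' := KGaux4.NVC_of_pos (by linarith : (0 : ℝ) < 1 - h)
    obtain ⟨W1, W2, d1, d2, v1, v2, hW1, hu1, hW2, hz2, hS1, hS2, hd1, hd2, hpde⟩ :=
      KGaux7.mainSlices (1 - h) hNV' hu' hp (by rw [Prod.mk.eta]; exact hne)
    rw [KGaux7.iter2 hW1 hu1 hS1 hd1, KGaux7.iter2 hW2 hz2 hS2 hd2]
    push_cast at hpde ⊢
    linear_combination hpde
  · intro hint p hp hne
    have hNV2 := KGaux4.NVC_of_nonint hint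
    obtain ⟨Wa1, Wa2, da1, da2, va1, va2, hWa1, hua1, hWa2, hza2, hSa1, hSa2, hda1, hda2, hpa⟩ :=
      KGaux7.mainSlices h hNVh hu' hp (by rw [Prod.mk.eta]; exact hne)
    obtain ⟨Wb1, Wb2, db1, db2, vb1, vb2, hWb1, hub1, hWb2, hzb2, hSb1, hSb2, hdb1, hdb2, hpb⟩ :=
      KGaux7.mainSlices (1 - h) hNV2 hu' hp (by rw [Prod.mk.eta]; exact hne)
    set KA : ℂ := (-2 * Complex.I / (4 : ℂ) ^ ((h : ℝ) : ℂ)) *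
      (Complex.Gamma (2 * h) / Complex.Gamma h ^ 2) *
      (Complex.Gamma (1 - 2 * h) / Complex.Gamma (1 - ((h : ℝ) : ℂ)) ^ 2) with hKA
    set KB : ℂ := (-2 * Complex.I / (4 : ℂ) ^ ((h : ℝ) : ℂ)) *
      (Complex.Gamma (2 * h) / Complex.Gamma h ^ 2) *
      (Complex.Gamma (2 * h - 1) / Complex.Gamma h ^ 2) with hKB
    have hS1c : ∀ s ∈ Wa1 ∩ Wb1,
        HasDerivAt (fun σ : ℝ => Gtilde h σ (p.2 : ℂ) u' (z' : ℂ))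
          (KA * da1 s + KB * db1 s) s := by
      intro s hs
      have hsum := ((hSa1 s hs.1).const_mul KA).add ((hSb1 s hs.2).const_mul KB)
      apply hsum.congr_of_eventuallyEq
      apply Filter.Eventually.of_forall
      intro σ
      simp only [KGaux8.Gtilde_decomp, Pi.add_apply, hKA, hKB]
    have hS2c : ∀ t ∈ Wa2 ∩ Wb2,
        HasDerivAt (fun τ : ℝ => Gtilde h p.1 (τ : ℂ) u' (z' : ℂ))
          (KA * da2 t + KB * db2 t) t := by
      intro t ht
      have hsum := ((hSa2 t ht.1).const_mul KA).add ((hSb2 t ht.2).const_mul KB)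
      apply hsum.congr_of_eventuallyEq
      apply Filter.Eventually.of_forall
      intro τ
      simp only [KGaux8.Gtilde_decomp, Pi.add_apply, hKA, hKB]
    have hd1c : HasDerivAt (fun s => KA * da1 s + KB * db1 s) (KA * va1 + KB * vb1) p.1 :=
      (hda1.const_mul KA).add (hdb1.const_mul KB)
    have hd2c : HasDerivAt (fun t => KA * da2 t + KB * db2 t) (KA * va2 + KB * vb2) p.2 :=
      (hda2.const_mul KA).add (hdb2.const_mul KB)
    rw [KGaux7.iter2 (hWa1.inter hWb1) ⟨hua1, hub1⟩ hS1c hd1c,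
      KGaux7.iter2 (hWa2.inter hWb2) ⟨hza2, hzb2⟩ hS2c hd2c]
    rw [KGaux8.Gtilde_decomp, ← hKA, ← hKB]
    push_cast at hpb
    linear_combination KA * hpa + KB * hpb

end
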